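/- Under the hypotheses of the previous setting (S an m-dimensional space of C^{m-1} functions on [a,b] containing constants, DS an (m-1)-dimensional EC-space, f₁ ≡ 1 and f₂,...,f_m the transition functions), define B_ℓ = f_ℓ - f_{ℓ+1} for ℓ = 1,...,m-1 and B_m = f_m. Then: (i) ∑_{ℓ=1}^m B_ℓ ≡ 1 on [a,b]; (ii) B_ℓ vanishes to order exactly ℓ-1 at a and to order exactly m-ℓ at b; (iii) B_ℓ > 0 on (a,b). -/

import Mathlib

def VanishesTo (F : ℝ → ℝ) (x : ℝ) (μ : ℕ) : Prop :=
  ∀ r < μ, iteratedDeriv r F x = 0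

def AtMostZeros (m : ℕ) (I : Set ℝ) (F : ℝ → ℝ) : Prop :=
  ∀ (h : ℕ) (τ : Fin h → ℝ) (μ : Fin h → ℕ),
    Function.Injective τ → (∀ j, τ j ∈ I) → (∀ j, 1 ≤ μ j ∧ μ j ≤ m) →
    (∑ j, μ j) = m → ¬ (∀ j, VanishesTo F (τ j) (μ j))

/-!
Count zeros with multiplicity. Rolle's theorem, applied between consecutive zeros, turns `N + 1`
zeros of a function on `[a, b]` into `N` zeros of its derivative. Since `DS` is an EC-space of
dimension `m - 1`, a function of `S` whose derivative has `m - 1` zeros in `[a, b]` is constant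
there, so a function of `S` with `m` zeros in `[a, b]` vanishes on `[a, b]`.

For `ℓ ≥ 2`, if `D^{ℓ-1} f_ℓ(a)` vanished, or if `f_ℓ` had a zero in `(a, b)` (Rolle then adds one
for `D f_ℓ`), then `D f_ℓ` would have `m - 1` zeros, forcing `f_ℓ(a) = f_ℓ(b)`. Hence `f_ℓ > 0`
on `(a, b)`, and its leading coefficient `D^{ℓ-1} f_ℓ(a)`, whose sign is that of `f_ℓ` near `a`,
is positive.

`B_ℓ = f_ℓ - f_{ℓ+1}` has `ℓ - 1` zeros at `a`, `m - ℓ` at `b`, and the same leading coefficient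
at `a` as `f_ℓ`, so it is positive near `a`. One more zero, at `b` or inside `(a, b)`, would make
it vanish on `[a, b]`; so its order at `b` is exact and it keeps its sign on `(a, b)`. Part (i)
telescopes.
-/

open Set Filter Topology

def VanishesExactlyTo (F : ℝ → ℝ) (x : ℝ) (n : ℕ) : Prop :=
  VanishesTo F x n ∧ iteratedDeriv n F x ≠ 0

section VanishesTo

variable {F G : ℝ → ℝ} {x : ℝ} {n k : ℕ}

theorem VanishesTo.mono (h : VanishesTo F x n) (hk : k ≤ n) : VanishesTo F x k :=
  fun r hr => h r (hr.trans_le hk)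

theorem vanishesTo_succ_iff :
    VanishesTo F x (n + 1) ↔ VanishesTo F x n ∧ iteratedDeriv n F x = 0 := by
  simp only [VanishesTo, Nat.lt_succ_iff_lt_or_eq, or_imp, forall_and, forall_eq]

theorem vanishesTo_succ_iff_deriv :
    VanishesTo F x (n + 1) ↔ F x = 0 ∧ VanishesTo (deriv F) x n := by
  simp only [VanishesTo, Nat.forall_lt_succ_left, iteratedDeriv_zero, iteratedDeriv_succ']

theorem vanishesTo_one_iff : VanishesTo F x 1 ↔ F x = 0 := by
  simp [VanishesTo]

theorem VanishesTo.deriv (h : VanishesTo F x n) : VanishesTo (deriv F) x (n - 1) := by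
  obtain _ | n := n
  · exact fun r hr => absurd hr (Nat.not_lt_zero r)
  · exact (vanishesTo_succ_iff_deriv.1 h).2

theorem vanishesTo_sub_const_succ_iff {c : ℝ} :
    VanishesTo (fun y => F y - c) x (n + 1) ↔ F x = c ∧ VanishesTo (deriv F) x n := by
  rw [vanishesTo_succ_iff_deriv, deriv_sub_const_fun, sub_eq_zero]

theorem VanishesTo.sub {N : ℕ} (hF : ContDiff ℝ N F) (hG : ContDiff ℝ N G) (hk : k ≤ N + 1)
    (hFv : VanishesTo F x k) (hGv : VanishesTo G x k) : VanishesTo (F - G) x k := fun r hr => by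
  have hrN : (r : WithTop ℕ∞) ≤ N := by exact_mod_cast (by omega : r ≤ N)
  rw [iteratedDeriv_sub (hF.of_le hrN).contDiffAt (hG.of_le hrN).contDiffAt, hFv r hr, hGv r hr,
    sub_zero]

end VanishesTo

/-- `G` has at least `N` zeros in `I`, counted with multiplicity. -/
def HasZerosIn (G : ℝ → ℝ) (I : Set ℝ) (N : ℕ) : Prop :=
  ∃ (s : Finset ℝ) (μ : ℝ → ℕ),
    ↑s ⊆ I ∧ ∑ x ∈ s, μ x = N ∧ ∀ x ∈ s, VanishesTo G x (μ x)

namespace HasZerosIn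

variable {G : ℝ → ℝ} {I J : Set ℝ} {N n : ℕ} {x : ℝ}

theorem empty : HasZerosIn G ∅ 0 := ⟨∅, 0, by simp, by simp, by simp⟩

theorem mono (h : HasZerosIn G I N) (hIJ : I ⊆ J) : HasZerosIn G J N :=
  let ⟨s, μ, hsI, hsum, hv⟩ := h
  ⟨s, μ, hsI.trans hIJ, hsum, hv⟩

theorem insert (h : HasZerosIn G I N) (hx : x ∉ I) (hv : VanishesTo G x n) :
    HasZerosIn G (insert x I) (n + N) := by
  obtain ⟨s, μ, hsI, hsum, hvs⟩ := h
  have hxs : x ∉ s := fun hx' => hx (hsI hx')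
  have hne : ∀ y ∈ s, y ≠ x := fun y hy hyx => hxs (hyx ▸ hy)
  refine ⟨Insert.insert x s, Function.update μ x n, ?_, ?_, ?_⟩
  · simpa only [Finset.coe_insert] using Set.insert_subset_insert hsI
  · rw [Finset.sum_insert hxs, Function.update_self, ← hsum]
    congr 1
    exact Finset.sum_congr rfl fun y hy => Function.update_of_ne (hne y hy) _ _
  · intro y hy
    obtain rfl | hy := Finset.mem_insert.1 hy
    · simpa using hv
    · simpa [Function.update_of_ne (hne y hy)] using hvs y hy

theorem exists_finset_forall_ne_zero (h : HasZerosIn G I N) :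
    ∃ (s : Finset ℝ) (μ : ℝ → ℕ),
      ↑s ⊆ I ∧ ∑ x ∈ s, μ x = N ∧ ∀ x ∈ s, μ x ≠ 0 ∧ VanishesTo G x (μ x) := by
  obtain ⟨s, μ, hsI, hsum, hv⟩ := h
  refine ⟨s.filter (μ · ≠ 0), μ, fun y hy => hsI (Finset.mem_filter.1 hy).1,
    (Finset.sum_filter_ne_zero s).trans hsum, fun y hy => ?_⟩
  obtain ⟨hys, hμy⟩ := Finset.mem_filter.1 hy
  exact ⟨hμy, hv y hys⟩

theorem exists_eq_zero (h : HasZerosIn G I (N + 1)) : ∃ y ∈ I, G y = 0 := by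
  obtain ⟨s, μ, hsI, hsum, hv⟩ := h
  obtain ⟨y, hy, hμy⟩ := Finset.exists_ne_zero_of_sum_ne_zero (hsum.trans_ne N.succ_ne_zero)
  exact ⟨y, hsI hy, hv y hy 0 (Nat.pos_of_ne_zero hμy)⟩

end HasZerosIn

theorem AtMostZeros.not_hasZerosIn {G : ℝ → ℝ} {I : Set ℝ} {N : ℕ}
    (h : AtMostZeros N I G) : ¬ HasZerosIn G I N := by
  intro hZ
  obtain ⟨t, μ, htI, htsum, hv⟩ := hZ.exists_finset_forall_ne_zero
  let e := t.equivFin.symm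
  refine h t.card (fun j => e j) (fun j => μ (e j)) (Subtype.val_injective.comp e.injective)
    (fun j => htI (e j).2) (fun j => ⟨Nat.one_le_iff_ne_zero.2 (hv _ (e j).2).1, ?_⟩) ?_
    (fun j => (hv _ (e j).2).2)
  · exact htsum ▸ Finset.single_le_sum (fun _ _ => Nat.zero_le _) (e j).2
  · rw [← htsum, ← Finset.sum_coe_sort t]
    exact Equiv.sum_comp e (fun y : t => μ y)

section Rolle

variable {G : ℝ → ℝ} {I : Set ℝ} {N : ℕ}

/-- The bound `c` keeps the zeros found so far to the left of the next Rolle point. -/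
theorem hasZerosIn_deriv_inter_Iic (hG : Continuous G) (hI : I.OrdConnected) {s : Finset ℝ}
    {μ : ℝ → ℕ} (hs : s.Nonempty) (hsI : ↑s ⊆ I)
    (hv : ∀ x ∈ s, μ x ≠ 0 ∧ VanishesTo G x (μ x)) {c : ℝ} (hc : ∀ x ∈ s, x ≤ c) :
    HasZerosIn (deriv G) (I ∩ Iic c) (∑ x ∈ s, μ x - 1) := by
  induction s using Finset.induction_on_max generalizing c with
  | empty => exact absurd hs Finset.not_nonempty_empty
  | insert e s hlt ih =>
    have hse : ∀ x ∈ s, x ∈ insert e s := fun x hx => Finset.mem_insert_of_mem hx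
    have heI : e ∈ I := hsI (Finset.mem_insert_self e s)
    have hec : e ≤ c := hc e (Finset.mem_insert_self e s)
    obtain ⟨hμe, hve⟩ := hv e (Finset.mem_insert_self e s)
    rw [Finset.sum_insert fun he => (hlt e he).false]
    rcases s.eq_empty_or_nonempty with rfl | hs'
    · exact (HasZerosIn.empty.insert (notMem_empty e) hve.deriv).mono (by simpa using ⟨heI, hec⟩)
    set d := s.max' hs'
    have hd : d ∈ s := s.max'_mem hs'
    have hde : d < e := hlt d hd
    obtain ⟨hμd, hvd⟩ := hv d (hse d hd)
    obtain ⟨ξ, hξ, hξ0⟩ := exists_deriv_eq_zero hde hG.continuousOn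
      ((hvd 0 (Nat.pos_of_ne_zero hμd)).trans (hve 0 (Nat.pos_of_ne_zero hμe)).symm)
    have hZ := ih hs' (fun x hx => hsI (hse x hx)) (fun x hx => hv x (hse x hx))
      (c := d) (fun x hx => s.le_max' x hx)
    have hsum_pos : 0 < ∑ x ∈ s, μ x :=
      Finset.sum_pos (fun x hx => Nat.pos_of_ne_zero (hv x (hse x hx)).1) hs'
    have hZ' := (hZ.insert (x := ξ) (fun h => hξ.1.not_ge h.2) (vanishesTo_one_iff.2 hξ0)).insert
      (x := e) (by simp [hξ.2.ne', hde.not_ge]) hve.deriv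
    refine (by omega : μ e - 1 + (1 + (∑ x ∈ s, μ x - 1)) = μ e + ∑ x ∈ s, μ x - 1) ▸
      hZ'.mono (insert_subset ⟨heI, hec⟩ (insert_subset ⟨?_, hξ.2.le.trans hec⟩ ?_))
    · exact hI.out (hsI (hse d hd)) heI (Ioo_subset_Icc_self hξ)
    · exact fun y hy => ⟨hy.1, hy.2.trans (hde.le.trans hec)⟩

theorem HasZerosIn.deriv (hG : Continuous G) (hI : I.OrdConnected) (h : HasZerosIn G I (N + 1)) :
    HasZerosIn (deriv G) I N := by
  obtain ⟨s, μ, hsI, hsum, hv⟩ := h.exists_finset_forall_ne_zero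
  have hs : s.Nonempty := Finset.nonempty_of_sum_ne_zero (hsum.trans_ne N.succ_ne_zero)
  have hZ := hasZerosIn_deriv_inter_Iic hG hI hs hsI hv (c := s.max' hs) (s.le_max' · ·)
  rw [hsum, Nat.add_sub_cancel] at hZ
  exact hZ.mono inter_subset_left

end Rolle

section Sign

variable {F : ℝ → ℝ} {a b : ℝ} {n : ℕ}

theorem eventually_pos_of_vanishesTo (hF : ContDiff ℝ n F) (hv : VanishesTo F a n)
    (hpos : 0 < iteratedDeriv n F a) : ∀ᶠ x in 𝓝[>] a, 0 < F x := by
  induction n generalizing F with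
  | zero =>
    rw [iteratedDeriv_zero] at hpos
    exact eventually_nhdsWithin_of_eventually_nhds
      (hF.continuous.continuousAt.eventually (lt_mem_nhds hpos))
  | succ n ih =>
    obtain ⟨hdiff, -, hF'⟩ := contDiff_succ_iff_deriv (n := n).1 (by exact_mod_cast hF)
    obtain ⟨ha0, hv'⟩ := vanishesTo_succ_iff_deriv.1 hv
    obtain ⟨u, hau, hu⟩ := mem_nhdsGT_iff_exists_Ioo_subset.1
      (ih hF' hv' (by rwa [← iteratedDeriv_succ']))
    have hmono : StrictMonoOn F (Icc a u) := strictMonoOn_of_deriv_pos (convex_Icc a u)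
      hdiff.continuous.continuousOn fun x hx => hu (by rwa [interior_Icc] at hx)
    filter_upwards [Ioo_mem_nhdsGT hau] with x hx
    simpa [ha0] using hmono (left_mem_Icc.2 hau.le) (Ioo_subset_Icc_self hx) hx.1

theorem exists_pos_of_vanishesTo (hab : a < b) (hF : ContDiff ℝ n F) (hv : VanishesTo F a n)
    (hpos : 0 < iteratedDeriv n F a) : ∃ x ∈ Ioo a b, 0 < F x := by
  obtain ⟨x, hxF, hx⟩ :=
    ((eventually_pos_of_vanishesTo hF hv hpos).and (Ioo_mem_nhdsGT hab)).exists
  exact ⟨x, hx, hxF⟩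

theorem iteratedDeriv_pos_of_vanishesTo (hab : a < b) (hF : ContDiff ℝ n F)
    (hv : VanishesTo F a n) (hne : iteratedDeriv n F a ≠ 0) (hpos : ∀ x ∈ Ioo a b, 0 < F x) :
    0 < iteratedDeriv n F a := by
  refine hne.lt_or_gt.resolve_left fun hneg => ?_
  obtain ⟨x, hx, hFx⟩ := exists_pos_of_vanishesTo (F := -F) hab hF.neg
    (fun r hr => by simp [hv r hr]) (by simpa using hneg)
  exact (hpos x hx).not_gt (by simpa using hFx)

theorem IsPreconnected.pos_of_ne_zero {s : Set ℝ} (hs : IsPreconnected s)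
    (hF : ContinuousOn F s) (hne : ∀ x ∈ s, F x ≠ 0) {y : ℝ} (hy : y ∈ s) (hFy : 0 < F y) :
    ∀ x ∈ s, 0 < F x := by
  intro x hx
  by_contra! hle
  obtain ⟨z, hz, hz0⟩ := hs.intermediate_value hx hy hF ⟨hle, hFy.le⟩
  exact hne z hz hz0

end Sign

section Interval

variable {G : ℝ → ℝ} {a b : ℝ} {p q : ℕ}

theorem hasZerosIn_Icc_of_vanishesTo (hab : a < b) (ha : VanishesTo G a p)
    (hb : VanishesTo G b q) : HasZerosIn G (Icc a b) (p + q) :=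
  ((HasZerosIn.empty.insert (notMem_empty b) hb).insert (by simpa using hab.ne) ha).mono
    (by simp [insert_subset_iff, hab.le])

theorem hasZerosIn_Icc_of_vanishesTo_of_mem_Ioo {x : ℝ} (hx : x ∈ Ioo a b)
    (ha : VanishesTo G a p) (hx0 : G x = 0) (hb : VanishesTo G b q) :
    HasZerosIn G (Icc a b) (p + (1 + q)) :=
  (((HasZerosIn.empty.insert (notMem_empty b) hb).insert (by simpa using hx.2.ne)
    (vanishesTo_one_iff.2 hx0)).insert (by simp [hx.1.ne, (hx.1.trans hx.2).ne]) ha).mono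
    (by simp [insert_subset_iff, hx.1.le, hx.2.le, (hx.1.trans hx.2).le])

variable {n : ℕ} (hEC : (∃ x ∈ Icc a b, deriv G x ≠ 0) → AtMostZeros n (Icc a b) (deriv G))
include hEC

theorem eq_of_hasZerosIn_deriv (hG : Differentiable ℝ G)
    (hZ : HasZerosIn (deriv G) (Icc a b) n) : ∀ x ∈ Icc a b, G x = G a := by
  have h0 : ∀ x ∈ Icc a b, deriv G x = 0 := by
    by_contra! h
    exact (hEC h).not_hasZerosIn hZ
  refine constant_of_has_deriv_right_zero hG.continuous.continuousOn fun x hx => ?_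
  simpa [h0 x (Ico_subset_Icc_self hx)] using (hG x).hasDerivAt.hasDerivWithinAt

theorem eq_zero_of_hasZerosIn (hG : Differentiable ℝ G)
    (hZ : HasZerosIn G (Icc a b) (n + 1)) : ∀ x ∈ Icc a b, G x = 0 := by
  obtain ⟨y, hy, hy0⟩ := hZ.exists_eq_zero
  have hconst := eq_of_hasZerosIn_deriv hEC hG (hZ.deriv hG.continuous ordConnected_Icc)
  exact fun x hx => (hconst x hx).trans ((hconst y hy).symm.trans hy0)

theorem pos_of_vanishesTo_sub_const (hab : a < b) (hG : Differentiable ℝ G) (hp : p ≠ 0)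
    (ha : VanishesTo G a p) {c : ℝ} (hc : 0 < c) (hb : VanishesTo (fun x => G x - c) b (q + 1))
    (hpq : p + q = n) : ∀ x ∈ Ioo a b, 0 < G x := by
  obtain ⟨hGb, hb'⟩ := vanishesTo_sub_const_succ_iff.1 hb
  have hGa : G a = 0 := ha 0 (Nat.pos_of_ne_zero hp)
  have hne : ∀ x ∈ Ioc a b, G x ≠ 0 := by
    rintro x ⟨hax, hxb⟩ hx0
    obtain hxb | rfl := hxb.lt_or_eq
    · obtain ⟨ξ, hξ, hξ0⟩ :=
        exists_deriv_eq_zero hax hG.continuous.continuousOn (hGa.trans hx0.symm)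
      have hZ := hasZerosIn_Icc_of_vanishesTo_of_mem_Ioo ⟨hξ.1, hξ.2.trans hxb⟩ ha.deriv hξ0 hb'
      have := eq_of_hasZerosIn_deriv hEC hG ((by omega : p - 1 + (1 + q) = n) ▸ hZ) b
        (right_mem_Icc.2 hab.le)
      linarith
    · linarith
  exact fun x hx => isPreconnected_Ioc.pos_of_ne_zero hG.continuous.continuousOn hne
    (right_mem_Ioc.2 hab) (hGb ▸ hc) x (Ioo_subset_Ioc_self hx)

theorem iteratedDeriv_pos_of_vanishesTo_sub_const (hab : a < b) (hG : ContDiff ℝ n G)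
    (hn : n ≠ 0) (hp : p ≠ 0) (ha : VanishesTo G a p) {c : ℝ} (hc : 0 < c)
    (hb : VanishesTo (fun x => G x - c) b (q + 1)) (hpq : p + q = n) :
    0 < iteratedDeriv p G a := by
  have hdiff : Differentiable ℝ G := hG.differentiable (by exact_mod_cast hn)
  refine iteratedDeriv_pos_of_vanishesTo hab (hG.of_le (by exact_mod_cast (by omega : p ≤ n)))
    ha (fun h0 => ?_) (pos_of_vanishesTo_sub_const hEC hab hdiff hp ha hc hb hpq)
  obtain ⟨hGb, hb'⟩ := vanishesTo_sub_const_succ_iff.1 hb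
  have hZ := hasZerosIn_Icc_of_vanishesTo hab (vanishesTo_succ_iff.2 ⟨ha, h0⟩).deriv hb'
  have := eq_of_hasZerosIn_deriv hEC hdiff ((by omega : p + 1 - 1 + q = n) ▸ hZ) b
    (right_mem_Icc.2 hab.le)
  have hGa : G a = 0 := ha 0 (Nat.pos_of_ne_zero hp)
  linarith

theorem iteratedDeriv_ne_zero_and_pos_of_vanishesTo (hab : a < b) (hG : ContDiff ℝ n G)
    (hn : n ≠ 0) (ha : VanishesTo G a p) (hb : VanishesTo G b q) (hpq : p + q = n)
    (hlead : 0 < iteratedDeriv p G a) : iteratedDeriv q G b ≠ 0 ∧ ∀ x ∈ Ioo a b, 0 < G x := by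
  have hdiff : Differentiable ℝ G := hG.differentiable (by exact_mod_cast hn)
  obtain ⟨y, hy, hGy⟩ :=
    exists_pos_of_vanishesTo hab (hG.of_le (by exact_mod_cast (by omega : p ≤ n))) ha hlead
  have hnz : ¬ ∀ x ∈ Icc a b, G x = 0 := fun h => hGy.ne' (h y (Ioo_subset_Icc_self hy))
  refine ⟨fun h0 => hnz (eq_zero_of_hasZerosIn hEC hdiff ?_),
    isPreconnected_Ioo.pos_of_ne_zero hdiff.continuous.continuousOn
      (fun x hx hx0 => hnz (eq_zero_of_hasZerosIn hEC hdiff ?_)) hy hGy⟩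
  · exact (by omega : p + (q + 1) = n + 1) ▸
      hasZerosIn_Icc_of_vanishesTo hab ha (vanishesTo_succ_iff.2 ⟨hb, h0⟩)
  · exact (by omega : p + (1 + q) = n + 1) ▸
      hasZerosIn_Icc_of_vanishesTo_of_mem_Ioo hx ha hx0 hb

end Interval

theorem vanishesExactlyTo_sub_and_pos {F G : ℝ → ℝ} {a b c : ℝ} {n p q : ℕ}
    (hab : a < b) (hF : ContDiff ℝ n F) (hG : ContDiff ℝ n G) (hn : n ≠ 0)
    (hEC : (∃ x ∈ Icc a b, deriv (F - G) x ≠ 0) → AtMostZeros n (Icc a b) (deriv (F - G)))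
    (haF : VanishesTo F a p) (haG : VanishesTo G a (p + 1))
    (hbF : VanishesTo (fun x => F x - c) b (q + 1)) (hbG : VanishesTo (fun x => G x - c) b q)
    (hpq : p + q = n) (hlead : 0 < iteratedDeriv p F a) :
    VanishesExactlyTo (F - G) a p ∧ VanishesExactlyTo (F - G) b q ∧
      ∀ x ∈ Ioo a b, 0 < (F - G) x := by
  have hpn : (p : WithTop ℕ∞) ≤ n := by exact_mod_cast (by omega : p ≤ n)
  have haFG : VanishesTo (F - G) a p := haF.sub hF hG (by omega) (haG.mono p.le_succ)
  have hleadFG : iteratedDeriv p (F - G) a = iteratedDeriv p F a := by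
    rw [iteratedDeriv_sub (hF.of_le hpn).contDiffAt (hG.of_le hpn).contDiffAt,
      haG p p.lt_succ_self, sub_zero]
  have hbFG : VanishesTo (F - G) b q := by
    have hsub : (fun x => F x - c) - (fun x => G x - c) = F - G := by
      funext x
      simp
    exact hsub ▸ (hbF.mono q.le_succ).sub (hF.sub contDiff_const) (hG.sub contDiff_const)
      (by omega) hbG
  obtain ⟨hbq, hpos⟩ := iteratedDeriv_ne_zero_and_pos_of_vanishesTo hEC hab (hF.sub hG) hn haFG
    hbFG hpq (hleadFG ▸ hlead)
  exact ⟨⟨haFG, hleadFG ▸ hlead.ne'⟩, ⟨hbFG, hbq⟩, hpos⟩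

theorem sum_Icc_sub_succ {M : Type*} [AddCommGroup M] (g : ℕ → M) {m : ℕ} (hm : 1 ≤ m) :
    ∑ ℓ ∈ Finset.Icc 1 m, (g ℓ - g (ℓ + 1)) = g 1 - g (m + 1) := by
  rw [← neg_sub, ← Finset.sum_Icc_sub hm, ← Finset.sum_neg_distrib]
  simp only [neg_sub]

theorem stmt_8_general (m : ℕ) (hm : 2 ≤ m) (a b : ℝ) (hab : a < b)
    (S : Submodule ℝ (ℝ → ℝ))
    (hsm : ∀ F ∈ S, ContDiff ℝ (m - 1 : ℕ) F)
    (hDSEC : ∀ F ∈ S, (∃ x ∈ Set.Icc a b, deriv F x ≠ 0) →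
      AtMostZeros (m - 1) (Set.Icc a b) (deriv F))
    (f : ℕ → ℝ → ℝ)
    (hf1 : f 1 = fun _ => 1)
    (hftop : f (m + 1) = fun _ => 0)
    (hfS : ∀ ℓ, 1 ≤ ℓ → ℓ ≤ m → f ℓ ∈ S)
    (ha0 : ∀ ℓ, 2 ≤ ℓ → ℓ ≤ m → ∀ r ≤ ℓ - 2, iteratedDeriv r (f ℓ) a = 0)
    (hb1 : ∀ ℓ, 2 ≤ ℓ → ℓ ≤ m → f ℓ b = 1)
    (hb0 : ∀ ℓ, 2 ≤ ℓ → ℓ ≤ m → ∀ r, 1 ≤ r → r ≤ m - ℓ → iteratedDeriv r (f ℓ) b = 0)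
    (B : ℕ → ℝ → ℝ)
    (hB : ∀ ℓ, 1 ≤ ℓ → ℓ ≤ m → B ℓ = fun x => f ℓ x - f (ℓ + 1) x) :
    (∀ x ∈ Set.Icc a b, ∑ ℓ ∈ Finset.Icc 1 m, B ℓ x = 1) ∧
    (∀ ℓ, 1 ≤ ℓ → ℓ ≤ m →
      ((∀ r < ℓ - 1, iteratedDeriv r (B ℓ) a = 0) ∧ iteratedDeriv (ℓ - 1) (B ℓ) a ≠ 0) ∧
      ((∀ r < m - ℓ, iteratedDeriv r (B ℓ) b = 0) ∧ iteratedDeriv (m - ℓ) (B ℓ) b ≠ 0) ∧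
      (∀ x ∈ Set.Ioo a b, 0 < B ℓ x)) := by
  have hfS' : ∀ ℓ, 1 ≤ ℓ → ℓ ≤ m + 1 → f ℓ ∈ S := fun ℓ h1 h2 =>
    h2.lt_or_eq.elim (fun h2 => hfS ℓ h1 (by omega)) fun h2 => h2 ▸ hftop ▸ S.zero_mem
  have hfa : ∀ ℓ, 1 ≤ ℓ → ℓ ≤ m + 1 → VanishesTo (f ℓ) a (ℓ - 1) := fun ℓ h1 h2 r hr =>
    h2.lt_or_eq.elim (fun h2 => ha0 ℓ (by omega) (by omega) r (by omega))
      fun h2 => by simp [h2, hftop]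
  have hfb : ∀ ℓ, 1 ≤ ℓ → ℓ ≤ m → VanishesTo (fun x => f ℓ x - 1) b (m - ℓ + 1) := by
    intro ℓ h1 h2
    rw [vanishesTo_sub_const_succ_iff]
    rcases h1.lt_or_eq with h1 | rfl
    · refine ⟨hb1 ℓ h1 h2, fun r hr => ?_⟩
      rw [← iteratedDeriv_succ']
      exact hb0 ℓ h1 h2 _ (by omega) (by omega)
    · simp [hf1, VanishesTo]
  have hflead : ∀ ℓ, 1 ≤ ℓ → ℓ ≤ m → 0 < iteratedDeriv (ℓ - 1) (f ℓ) a := by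
    intro ℓ h1 h2
    rcases h1.lt_or_eq with h1 | rfl
    · exact iteratedDeriv_pos_of_vanishesTo_sub_const (hDSEC _ (hfS ℓ (by omega) h2)) hab
        (hsm _ (hfS ℓ (by omega) h2)) (by omega) (by omega) (hfa ℓ (by omega) (by omega))
        one_pos (hfb ℓ (by omega) h2) (by omega)
    · simp [hf1]
  refine ⟨fun x _ => ?_, fun ℓ h1 h2 => ?_⟩
  · rw [Finset.sum_congr rfl fun ℓ hℓ =>
        congrFun (hB ℓ (Finset.mem_Icc.1 hℓ).1 (Finset.mem_Icc.1 hℓ).2) x,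
      sum_Icc_sub_succ (f · x) (by omega), hf1, hftop, sub_zero]
  · have hBS : B ℓ ∈ S :=
      hB ℓ h1 h2 ▸ S.sub_mem (hfS' ℓ h1 (by omega)) (hfS' (ℓ + 1) (by omega) (by omega))
    rw [hB ℓ h1 h2] at hBS ⊢
    refine vanishesExactlyTo_sub_and_pos hab (hsm _ (hfS' ℓ h1 (by omega)))
      (hsm _ (hfS' (ℓ + 1) (by omega) (by omega))) (by omega) (hDSEC _ hBS)
      (hfa ℓ h1 (by omega)) ((hfa (ℓ + 1) (by omega) (by omega)).mono (by omega)) (hfb ℓ h1 h2)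
      ?_ (by omega) (hflead ℓ h1 h2)
    rcases h2.lt_or_eq with h2 | rfl
    · exact (hfb (ℓ + 1) (by omega) h2).mono (by omega)
    · simp [VanishesTo]

theorem stmt_8 (m : ℕ) (hm : 2 ≤ m) (a b : ℝ) (hab : a < b)
    (S : Submodule ℝ (ℝ → ℝ))
    (hdim : Module.finrank ℝ S = m)
    (hsm : ∀ F ∈ S, ContDiff ℝ (m - 1 : ℕ) F)
    (hDSdim : Module.finrank ℝ ↥(Submodule.span ℝ (deriv '' (S : Set (ℝ → ℝ)))) = m - 1)
    (hDSEC : ∀ F ∈ S, (∃ x ∈ Set.Icc a b, deriv F x ≠ 0) →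
      AtMostZeros (m - 1) (Set.Icc a b) (deriv F))
    (f : ℕ → ℝ → ℝ)
    (hf1 : f 1 = fun _ => 1)
    (hftop : f (m + 1) = fun _ => 0)
    (hfS : ∀ ℓ, 1 ≤ ℓ → ℓ ≤ m → f ℓ ∈ S)
    (ha0 : ∀ ℓ, 2 ≤ ℓ → ℓ ≤ m → ∀ r ≤ ℓ - 2, iteratedDeriv r (f ℓ) a = 0)
    (hb1 : ∀ ℓ, 2 ≤ ℓ → ℓ ≤ m → f ℓ b = 1)
    (hb0 : ∀ ℓ, 2 ≤ ℓ → ℓ ≤ m → ∀ r, 1 ≤ r → r ≤ m - ℓ → iteratedDeriv r (f ℓ) b = 0)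
    (B : ℕ → ℝ → ℝ)
    (hB : ∀ ℓ, 1 ≤ ℓ → ℓ ≤ m → B ℓ = fun x => f ℓ x - f (ℓ + 1) x) :
    (∀ x ∈ Set.Icc a b, ∑ ℓ ∈ Finset.Icc 1 m, B ℓ x = 1) ∧
    (∀ ℓ, 1 ≤ ℓ → ℓ ≤ m →
      ((∀ r < ℓ - 1, iteratedDeriv r (B ℓ) a = 0) ∧ iteratedDeriv (ℓ - 1) (B ℓ) a ≠ 0) ∧
      ((∀ r < m - ℓ, iteratedDeriv r (B ℓ) b = 0) ∧ iteratedDeriv (m - ℓ) (B ℓ) b ≠ 0) ∧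
      (∀ x ∈ Set.Ioo a b, 0 < B ℓ x)) :=
  stmt_8_general m hm a b hab S hsm hDSEC f hf1 hftop hfS ha0 hb1 hb0 B hB
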